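/- Let Λ=(Δ,Θ) be a binary directive bi-sequence of the form Δ=ν a^ω and Θ=σ ϑ^ω, where ν is a finite word over {0,1}, σ a finite sequence of antimorphisms from {E,R} whose last element is ϑ, |ν|=|σ|=n₀, a∈{0,1} and ϑ∈{E,R}. Then for every n>n₀ there exists k∈ℕ such that w_n=w_{n₀}·x^k, where x is the unique finite word with w_{n₀}x=w_{n₀+1}. Consequently, u(Λ) is purely periodic with period q, where q is the finite word determined by q·w_{n₀}=w_{n₀+1}. -/
import Mathlib


/-!
Generalized pseudostandard words (de Luca–De Luca) over binary and ternary
alphabets: antimorphisms, pseudopalindromic closure, directive bi-sequences.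
-/

namespace GPS

variable {A : Type*} [Inhabited A]

/-- The involutory antimorphism on finite words induced by the letter map `f`:
reverse the word and apply `f` letterwise. -/
def anti (f : A → A) (w : List A) : List A := (w.map f).reverse

/-- `w` is an `f`-palindrome (a `ϑ`-palindrome for the antimorphism induced by `f`). -/
def IsPal (f : A → A) (w : List A) : Prop := anti f w = w

/-- The `f`-palindromic closure of `w`: a shortest `f`-palindrome having `w` as a
prefix (returns `w` itself in the degenerate case where none exists). -/
noncomputable def closure (f : A → A) (w : List A) : List A := by
  classical
  exact if h : ∃ n : ℕ, ∃ p : List A, p.length = n ∧ w <+: p ∧ IsPal f p then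
    Classical.choose (Nat.find_spec h)
  else w

/-- The sequence of pseudopalindromic prefixes `w_n` of the generalized
pseudostandard word `u(Δ, Θ)`; `prefixes Δ Θ n` is the paper's `w_n`, with
`Δ n = δ_{n+1}` and `Θ n = ϑ_{n+1}` (0-based indexing of the bi-sequence). -/
noncomputable def prefixes (Δ : ℕ → A) (Θ : ℕ → A → A) : ℕ → List A
  | 0 => []
  | n + 1 => closure (Θ n) (prefixes Δ Θ n ++ [Δ n])

/-- The generalized pseudostandard word `u(Δ, Θ)` as an infinite word `ℕ → A`. -/
noncomputable def word (Δ : ℕ → A) (Θ : ℕ → A → A) (k : ℕ) : A :=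
  (prefixes Δ Θ (k + 1)).getD k default

/-- `p` is a (finite) prefix of the infinite word `x`. -/
def IsPref (p : List A) (x : ℕ → A) : Prop := ∀ i < p.length, p.getD i default = x i

/-- `w` is a factor of the infinite word `x`. -/
def IsFactor (w : List A) (x : ℕ → A) : Prop :=
  ∃ i : ℕ, ∀ j < w.length, w.getD j default = x (i + j)

/-- `w` is a left special factor of the infinite word `x`. -/
def LeftSpecial (w : List A) (x : ℕ → A) : Prop :=
  ∃ a b : A, a ≠ b ∧ IsFactor (a :: w) x ∧ IsFactor (b :: w) x

/-- The infinite word `x` is (eventually) periodic, i.e. of the form `z v^ω`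
with `v` nonempty. -/
def Periodic (x : ℕ → A) : Prop :=
  ∃ p : ℕ, 0 < p ∧ ∃ N : ℕ, ∀ n, N ≤ n → x (n + p) = x n

/-- The infinite word `x` is purely periodic with period `q`, i.e. `x = q^ω`. -/
def PurePeriod (q : List A) (x : ℕ → A) : Prop :=
  q ≠ [] ∧ ∀ i : ℕ, x i = q.getD (i % q.length) default

/-- Concatenation of `k` copies of the finite word `l`, i.e. `l^k`. -/
def wpow (l : List A) (k : ℕ) : List A := (List.replicate k l).flatten

/-! ### The binary alphabet `{0,1}` -/

/-- Letter map of the reversal antimorphism `R` over `{0,1}`. -/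
def Rb : Fin 2 → Fin 2 := id

/-- Letter map of the exchange antimorphism `E` over `{0,1}` (`0 ↔ 1`). -/
def Eb : Fin 2 → Fin 2 := fun x => x + 1

/-- A binary directive bi-sequence is normalized if the sequence `(w_n)` contains
every prefix of `u(Δ,Θ)` that is an `R`-palindrome or an `E`-palindrome. -/
def NormalizedB (Δ : ℕ → Fin 2) (Θ : ℕ → Fin 2 → Fin 2) : Prop :=
  ∀ p : List (Fin 2), IsPref p (word Δ Θ) → (IsPal Rb p ∨ IsPal Eb p) →
    ∃ n : ℕ, prefixes Δ Θ n = p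

/-! ### The ternary alphabet `{0,1,2}` -/

/-- Letter map of the reversal antimorphism `R` over `{0,1,2}`. -/
def Rt : Fin 3 → Fin 3 := id

/-- Letter map of the exchange antimorphism `E_i` over `{0,1,2}`: it fixes `i`
and exchanges the other two letters (indeed `-(i+x) = i` iff `x = i` in `Fin 3`). -/
def Et (i : Fin 3) : Fin 3 → Fin 3 := fun x => -(i + x)

/-- A ternary directive bi-sequence is normalized if the sequence `(w_n)` contains
every prefix of `u(Δ,Θ)` that is a `ϑ`-palindrome for some involutory antimorphism `ϑ`. -/
def NormalizedT (Δ : ℕ → Fin 3) (Θ : ℕ → Fin 3 → Fin 3) : Prop :=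
  ∀ p : List (Fin 3), IsPref p (word Δ Θ) → (IsPal Rt p ∨ ∃ i : Fin 3, IsPal (Et i) p) →
    ∃ n : ℕ, prefixes Δ Θ n = p

end GPS
namespace GPS

variable {A : Type*} [Inhabited A]

def Invol (f : A → A) : Prop := ∀ x, f (f x) = x

lemma anti_append (f : A → A) (u v : List A) :
    anti f (u ++ v) = anti f v ++ anti f u := by simp [anti]

@[simp] lemma anti_length (f : A → A) (u : List A) : (anti f u).length = u.length := by
  simp [anti]

lemma anti_anti {f : A → A} (hf : Invol f) (u : List A) : anti f (anti f u) = u := by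
  simp only [anti, List.map_reverse, List.reverse_reverse, List.map_map]
  conv_rhs => rw [← List.map_id u]
  exact List.map_congr_left fun x _ => hf x

lemma pal_nil (f : A → A) : IsPal f ([] : List A) := rfl

lemma append_anti_pal {f : A → A} (hf : Invol f) (u : List A) : IsPal f (u ++ anti f u) := by
  unfold IsPal
  rw [anti_append, anti_anti hf]

lemma exists_pal {f : A → A} (hf : Invol f) (w : List A) :
    ∃ n : ℕ, ∃ p : List A, p.length = n ∧ w <+: p ∧ IsPal f p :=
  ⟨_, w ++ anti f w, rfl, ⟨anti f w, rfl⟩, append_anti_pal hf w⟩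

lemma closure_spec {f : A → A} (hf : Invol f) (w : List A) :
    w <+: closure f w ∧ IsPal f (closure f w) ∧
      ∀ p, w <+: p → IsPal f p → (closure f w).length ≤ p.length := by
  classical
  have h := exists_pal hf w
  unfold closure
  rw [dif_pos h]
  obtain ⟨hlen, hpre, hpal⟩ := Classical.choose_spec (Nat.find_spec h)
  refine ⟨hpre, hpal, fun p hp hpp => ?_⟩
  rw [hlen]
  exact Nat.find_min' h ⟨p, rfl, hp, hpp⟩

lemma anti_suffix_of_prefix {f : A → A} {u p : List A} (hpal : IsPal f p) (h : u <+: p) :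
    anti f u <:+ p := by
  obtain ⟨r, rfl⟩ := h
  refine ⟨anti f r, ?_⟩
  rw [← anti_append]; exact hpal

lemma suffix_eq_of_length {s₁ s₂ t : List A} (h₁ : s₁ <:+ t) (h₂ : s₂ <:+ t)
    (h : s₁.length = s₂.length) : s₁ = s₂ := by
  obtain ⟨a, rfl⟩ := h₁
  obtain ⟨b, hb⟩ := h₂
  have hab : a.length = b.length := by
    have := congrArg List.length hb
    simp at this ⊢; omega
  exact (List.append_inj hb.symm hab).2

lemma pal_drop {f : A → A} (hf : Invol f) {u r : List A} (hpal : IsPal f (u ++ r))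
    (hlen : r.length ≤ u.length) :
    IsPal f (u.drop r.length) ∧ r = anti f (u.take r.length) := by
  have hsuf : anti f u <:+ u ++ r := anti_suffix_of_prefix hpal ⟨r, rfl⟩
  -- anti f u = u.drop r.length ++ r
  have key : anti f u = u.drop r.length ++ r := by
    refine suffix_eq_of_length hsuf ?_ (by simp; omega)
    refine ⟨u.take r.length, ?_⟩
    rw [← List.append_assoc, List.take_append_drop]
  have key2 : anti f u = anti f (u.drop r.length) ++ anti f (u.take r.length) := by
    conv_lhs => rw [← List.take_append_drop r.length u, anti_append]
  rw [key] at key2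
  have hl : (u.drop r.length).length = (anti f (u.drop r.length)).length := by simp
  obtain ⟨e1, e2⟩ := List.append_inj key2 hl
  exact ⟨e1.symm, e2⟩

lemma pal_ext_unique {f : A → A} (hf : Invol f) {u p : List A} (hpal : IsPal f p)
    (hpre : u <+: p) (hlen : p.length ≤ 2 * u.length) :
    p = u ++ anti f (u.take (p.length - u.length)) := by
  obtain ⟨r, rfl⟩ := hpre
  have hr : r.length ≤ u.length := by simp at hlen; omega
  have := (pal_drop hf hpal hr).2
  congr 1
  rw [show (u ++ r).length - u.length = r.length by simp]
  exact this

lemma pal_suffix_closure_le {f : A → A} (hf : Invol f) {u z : List A}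
    (hz : z <:+ u) (hzp : IsPal f z) :
    (closure f u).length + z.length ≤ 2 * u.length := by
  obtain ⟨t, rfl⟩ := hz
  have hp : IsPal f ((t ++ z) ++ anti f t) := by
    unfold IsPal
    rw [anti_append, anti_append, anti_anti hf, hzp, List.append_assoc]
  have := (closure_spec hf (t ++ z)).2.2 _ ⟨anti f t, rfl⟩ hp
  simp at this ⊢
  omega

lemma step_lemma {f : A → A} (hf : Invol f) {v x : List A} {a : A}
    (hv : IsPal f v) (hx : closure f (v ++ [a]) = v ++ x) :
    closure f ((v ++ x) ++ [a]) = (v ++ x) ++ x := by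
  obtain ⟨hpre1, hpal1, hmin1⟩ := closure_spec hf (v ++ [a])
  rw [hx] at hpre1 hpal1
  obtain ⟨r0, hr0⟩ := hpre1
  have hax : [a] ++ r0 = x := by
    rw [List.append_assoc] at hr0
    exact List.append_cancel_left hr0
  have hxlen : x.length ≤ v.length + 2 := by
    have h1 := hmin1 _ ⟨anti f (v ++ [a]), rfl⟩ (append_anti_pal hf (v ++ [a]))
    rw [hx] at h1
    simp at h1; omega
  have hxpos : 1 ≤ x.length := by rw [← hax]; simp
  have hdag : anti f x ++ v = v ++ x := by
    have h2 : anti f (v ++ x) = v ++ x := hpal1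
    rwa [anti_append, hv] at h2
  have hbound : ∀ z : List A, z <:+ v ++ [a] → IsPal f z →
      z.length + x.length ≤ v.length + 2 := by
    intro z hz hzp
    have h3 := pal_suffix_closure_le hf hz hzp
    rw [hx] at h3
    have hz1 : z.length ≤ v.length + 1 := by
      have := hz.length_le; simpa using this
    simp at h3; omega
  -- the candidate
  have hcpal : IsPal f ((v ++ x) ++ x) := by
    unfold IsPal
    rw [anti_append, hpal1, ← List.append_assoc, hdag]
  have hcpre : (v ++ x) ++ [a] <+: (v ++ x) ++ x :=
    ⟨r0, by rw [List.append_assoc, hax]⟩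
  obtain ⟨hpre2, hpal2, hmin2⟩ := closure_spec hf ((v ++ x) ++ [a])
  have hle : (closure f ((v ++ x) ++ [a])).length ≤ v.length + 2 * x.length := by
    have := hmin2 _ hcpre hcpal
    simp only [List.length_append] at this; omega
  have hge : v.length + x.length + 1 ≤ (closure f ((v ++ x) ++ [a])).length := by
    have := hpre2.length_le
    simp only [List.length_append, List.length_cons, List.length_nil] at this; omega
  have hlen_eq : (closure f ((v ++ x) ++ [a])).length = v.length + 2 * x.length := by
    by_contra hne
    obtain ⟨r, hr⟩ := hpre2
    have hrlen : r.length + (v.length + x.length + 1) = (closure f ((v ++ x) ++ [a])).length := by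
      have := congrArg List.length hr
      simp only [List.length_append, List.length_cons, List.length_nil] at this; omega
    have hd2 : r.length + 2 ≤ x.length := by omega
    have hdv : r.length ≤ v.length := by omega
    have hpalc : IsPal f (((v ++ x) ++ [a]) ++ r) := by rw [hr]; exact hpal2
    have hzpal : IsPal f (((v ++ x) ++ [a]).drop r.length) :=
      (pal_drop hf hpalc (by simp; omega)).1
    set d := r.length with hd
    set z := ((v ++ x) ++ [a]).drop d with hzdef
    -- decomposition A : w' = anti f x ++ (v ++ [a])
    have w'A : (v ++ x) ++ [a] = anti f x ++ (v ++ [a]) := by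
      rw [← hdag, List.append_assoc]
    -- decomposition B : w' = (v ++ [a]) ++ (r0 ++ [a])
    have w'B : (v ++ x) ++ [a] = (v ++ [a]) ++ (r0 ++ [a]) := by
      rw [← hax]; simp
    have zA : z = (anti f x).drop d ++ (v ++ [a]) := by
      rw [hzdef, w'A, List.drop_append_of_le_length (by simp; omega)]
    have zB : z = (v ++ [a]).drop d ++ (r0 ++ [a]) := by
      rw [hzdef, w'B, List.drop_append_of_le_length (by simp; omega)]
    set z' := (v ++ [a]).drop d with hz'def
    have hz'pref : z' <+: z := ⟨r0 ++ [a], zB.symm⟩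
    have hz'suf : z' <:+ z := by
      rw [zA]
      exact (List.drop_suffix d (v ++ [a])).trans ⟨(anti f x).drop d, rfl⟩
    have hz'pal : IsPal f z' :=
      suffix_eq_of_length (anti_suffix_of_prefix hzpal hz'pref) hz'suf (by simp)
    have := hbound z' (List.drop_suffix d (v ++ [a])) hz'pal
    have hz'len : z'.length = v.length + 1 - d := by simp [hz'def]
    omega
  -- conclude by uniqueness
  have e1 := pal_ext_unique hf hpal2 hpre2
    (by simp only [List.length_append, List.length_cons, List.length_nil]; omega)
  have e2 := pal_ext_unique hf hcpal hcpre
    (by simp only [List.length_append, List.length_cons, List.length_nil]; omega)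
  rw [e1, e2, hlen_eq]
  congr 2
  congr 1
  simp only [List.length_append, List.length_cons, List.length_nil]
  omega

lemma wpow_zero (l : List A) : wpow l 0 = [] := rfl

lemma wpow_succ (l : List A) (n : ℕ) : wpow l (n + 1) = wpow l n ++ l := by
  simp [wpow, List.replicate_succ']

lemma wpow_succ' (l : List A) (n : ℕ) : wpow l (n + 1) = l ++ wpow l n := by
  simp [wpow, List.replicate_succ]

lemma wpow_length (l : List A) (k : ℕ) : (wpow l k).length = k * l.length := by
  induction k with
  | zero => simp [wpow]
  | succ n ih => rw [wpow_succ]; simp [ih]; ring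

lemma wpow_getD (l : List A) (k i : ℕ) (h : i < k * l.length) :
    (wpow l k).getD i default = l.getD (i % l.length) default := by
  induction k generalizing i with
  | zero => omega
  | succ n ih =>
    have h' : i < n * l.length + l.length := by rwa [Nat.succ_mul] at h
    rw [wpow_succ']
    rcases lt_or_ge i l.length with hi | hi
    · rw [List.getD_append _ _ _ _ hi, Nat.mod_eq_of_lt hi]
    · rw [List.getD_append_right _ _ _ _ hi, ih _ (by omega), Nat.mod_eq_sub_mod hi]

/-- for a binary bi-sequence of the form `(ν a^ω, σ ϑ^ω)` with
`|ν| = |σ| = n₀ = m₀ + 1` and `σ` ending in `ϑ`, every `w_n` with `n > n₀` equals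
`w_{n₀}·x^k` where `w_{n₀} x = w_{n₀+1}`; consequently `u(Λ)` is purely periodic
with period `q`, where `q·w_{n₀} = w_{n₀+1}`. -/
theorem periodic_shape_binary_constant (Δ : ℕ → Fin 2) (Θ : ℕ → Fin 2 → Fin 2)
    (hΘ : ∀ n, Θ n = Rb ∨ Θ n = Eb)
    (a : Fin 2) (ϑ : Fin 2 → Fin 2) (hϑ : ϑ = Rb ∨ ϑ = Eb)
    (m₀ : ℕ)
    (hΘtail : ∀ n, m₀ ≤ n → Θ n = ϑ)
    (hΔtail : ∀ n, m₀ + 1 ≤ n → Δ n = a)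
    (x : List (Fin 2)) (hx : prefixes Δ Θ (m₀ + 1) ++ x = prefixes Δ Θ (m₀ + 2)) :
    (∀ n : ℕ, m₀ + 1 < n → ∃ k : ℕ,
      prefixes Δ Θ n = prefixes Δ Θ (m₀ + 1) ++ wpow x k) ∧
    ∀ q : List (Fin 2), q ++ prefixes Δ Θ (m₀ + 1) = prefixes Δ Θ (m₀ + 2) →
      PurePeriod q (word Δ Θ) := by
  have hinv : ∀ g : Fin 2 → Fin 2, g = Rb ∨ g = Eb → Invol g := by
    rintro g (rfl | rfl)
    · intro y; rfl
    · intro y; fin_cases y <;> rfl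
  have hϑinv : Invol ϑ := hinv ϑ hϑ
  have hΘinv : ∀ n, Invol (Θ n) := fun n => hinv _ (hΘ n)
  set w : ℕ → List (Fin 2) := prefixes Δ Θ with hw
  have hrec : ∀ n, w (n + 1) = closure (Θ n) (w n ++ [Δ n]) := fun n => rfl
  have hrec' : ∀ n, m₀ + 1 ≤ n → w (n + 1) = closure ϑ (w n ++ [a]) := by
    intro n hn
    rw [hrec n, hΘtail n (by omega), hΔtail n hn]
  have hpal : ∀ n, m₀ + 1 ≤ n → IsPal ϑ (w n) := by
    intro n hn
    obtain ⟨m, rfl⟩ : ∃ m, n = m + 1 := ⟨n - 1, by omega⟩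
    rw [hrec m, hΘtail m (by omega)]
    exact (closure_spec hϑinv _).2.1
  have T : ∀ n, w (m₀ + 1 + n) = w (m₀ + 1) ++ wpow x n ∧
      w (m₀ + 1 + n + 1) = w (m₀ + 1 + n) ++ x := by
    intro n
    induction n with
    | zero => exact ⟨by simp [wpow_zero], hx.symm⟩
    | succ n ih =>
      obtain ⟨h1, h2⟩ := ih
      have h1' : w (m₀ + 1 + (n + 1)) = w (m₀ + 1) ++ wpow x (n + 1) := by
        rw [show m₀ + 1 + (n + 1) = m₀ + 1 + n + 1 from rfl, h2, h1, wpow_succ,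
          List.append_assoc]
      refine ⟨h1', ?_⟩
      have hx' : closure ϑ (w (m₀ + 1 + n) ++ [a]) = w (m₀ + 1 + n) ++ x := by
        rw [← hrec' (m₀ + 1 + n) (by omega)]; exact h2
      have hstep := step_lemma hϑinv (hpal (m₀ + 1 + n) (by omega)) hx'
      show w (m₀ + 1 + n + 1 + 1) = w (m₀ + 1 + n + 1) ++ x
      rw [hrec' (m₀ + 1 + n + 1) (by omega), h2]
      exact hstep
  constructor
  · intro n hn
    refine ⟨n - (m₀ + 1), ?_⟩
    have h := (T (n - (m₀ + 1))).1
    rwa [show m₀ + 1 + (n - (m₀ + 1)) = n by omega] at h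
  · intro q hq
    have hxq : q ++ w (m₀ + 1) = w (m₀ + 1) ++ x := by rw [hq, ← hx]
    have hlq : q.length = x.length := by
      have := congrArg List.length hxq
      simp only [List.length_append] at this; omega
    have hxpos : 0 < x.length := by
      have h2 : w (m₀ + 1 + 1) = closure ϑ (w (m₀ + 1) ++ [a]) := hrec' (m₀ + 1) le_rfl
      have h1 := (closure_spec hϑinv (w (m₀ + 1) ++ [a])).1.length_le
      rw [← h2] at h1
      have h3 := (T 1).1
      rw [h3] at h1
      simp only [List.length_append, List.length_cons, List.length_nil, wpow_length] at h1
      omega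
    have hconj : ∀ k, wpow q k ++ w (m₀ + 1) = w (m₀ + 1) ++ wpow x k := by
      intro k
      induction k with
      | zero => simp [wpow_zero]
      | succ k ih =>
        rw [wpow_succ, wpow_succ, List.append_assoc, hxq, ← List.append_assoc, ih,
          List.append_assoc]
    have hchain : ∀ m n, m ≤ n → w m <+: w n := by
      intro m n hmn
      induction n, hmn using Nat.le_induction with
      | base => exact List.prefix_rfl
      | succ n hmn ih =>
        refine ih.trans ?_
        rw [hrec n]
        exact (List.prefix_append _ _).trans (closure_spec (hΘinv n) _).1
    have hlen : ∀ n, n ≤ (w n).length := by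
      intro n
      induction n with
      | zero => simp
      | succ n ih =>
        have h1 := (closure_spec (hΘinv n) (w n ++ [Δ n])).1.length_le
        rw [← hrec n] at h1
        simp only [List.length_append, List.length_cons, List.length_nil] at h1
        omega
    refine ⟨?_, ?_⟩
    · intro h
      rw [h] at hlq
      simp at hlq
      omega
    · intro i
      have hiw : i < (w (i + 1)).length := by have := hlen (i + 1); omega
      obtain ⟨t, ht⟩ := hchain (i + 1) (m₀ + 1 + (i + 1)) (by omega)
      have hN2 : w (m₀ + 1 + (i + 1)) = wpow q (i + 1) ++ w (m₀ + 1) := by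
        rw [(T (i + 1)).1, ← hconj]
    
      have hqpos : 0 < q.length := by omega
      have hilt : i < (i + 1) * q.length := by
        have := Nat.mul_le_mul_left (i + 1) hqpos
        omega
      have hkey : (w (i + 1)).getD i default = (w (m₀ + 1 + (i + 1))).getD i default := by
        rw [← ht, List.getD_append _ _ _ _ hiw]
      have : word Δ Θ i = (w (i + 1)).getD i default := rfl
      rw [this, hkey, hN2,
        List.getD_append _ _ _ _ (by rw [wpow_length]; exact hilt),
        wpow_getD q (i + 1) i hilt, hlq]


end GPS
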